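/- Let X be a first countable, noncompact, realcompact (completely regular Hausdorff) space. If p is a P-point of the subspace βX \ X and q is a non-P-point of βX \ X, then the ring C_p is not isomorphic to the ring C_q. -/

import Mathlib

/-!
Realcompactness of `X` identifies the ring homomorphisms `C_r → ℝ` with the evaluations at the
points of `X ∪ {r} ⊆ βX`. A homomorphism `φ` gives a filter on `X` along which every `f ∈ C_r`
tends to `φ f`; a cluster point `u` of it in `βX` satisfies `f*(u) = φ f`, and `u ∈ X ∪ {r}`,
since otherwise a function unbounded near `u ∉ υX = X` could be cut off near `r` to lie in `C_r`.
Hence a ring isomorphism `C_p ≅ C_q` induces a homeomorphism `X ∪ {q} ≅ X ∪ {p}`, and it sends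
`q` to `p`: points of `X` have countable neighbourhood bases, whereas no sequence of `X` converges
to a point `q ∉ υX` (an unbounded `f` tends to `∞` along it, and a function alternating between
`0` and `1` on a subsequence has no value at `q`). As `X` is dense in `X ∪ {q}` and `X ∪ {p}`,
the homeomorphism extends to a self-homeomorphism of `βX` preserving `X`, which therefore
restricts to a homeomorphism of `βX \ X` sending `q` to `p`; so `p` and `q` are both `P`-points
or both not.
-/

open Filter Topology

variable {X : Type*} [TopologicalSpace X]

/-- The continuous extension `f* : βX → ℝ ∪ {∞}` of `f ∈ C(X)` to the Stone–Čech
compactification, with values in the one-point compactification of `ℝ`. -/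
noncomputable def fstar (f : C(X, ℝ)) : StoneCech X → OnePoint ℝ :=
  stoneCechExtend (OnePoint.continuous_coe.comp f.continuous)

/-- The set `C_p = {f ∈ C(X) : f*(p) ∈ ℝ}`. -/
def Cp (p : StoneCech X) : Set C(X, ℝ) :=
  {f : C(X, ℝ) | ∃ r : ℝ, fstar f p = (r : OnePoint ℝ)}

/-- The Hewitt realcompactification `υX`, viewed as the set of points of `βX` at which
every `f ∈ C(X)` has a real value. -/
def upsilon (X : Type*) [TopologicalSpace X] : Set (StoneCech X) :=
  {p | ∀ f : C(X, ℝ), ∃ r : ℝ, fstar f p = (r : OnePoint ℝ)}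

lemma fstar_unit (f : C(X, ℝ)) (x : X) :
    fstar f (stoneCechUnit x) = ((f x : ℝ) : OnePoint ℝ) :=
  congrFun (stoneCechExtend_extends (OnePoint.continuous_coe.comp f.continuous)) x

lemma neBot_comap_stoneCechUnit (p : StoneCech X) :
    (Filter.comap (stoneCechUnit : X → StoneCech X) (𝓝 p)).NeBot := by
  rw [Filter.comap_neBot_iff]
  intro t ht
  rcases mem_closure_iff_nhds.mp (denseRange_stoneCechUnit p) t ht with ⟨y, hyt, x, rfl⟩
  exact ⟨x, hyt⟩

lemma tendsto_fstar (f : C(X, ℝ)) (p : StoneCech X) :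
    Filter.Tendsto (fun x : X => ((f x : ℝ) : OnePoint ℝ))
      (Filter.comap (stoneCechUnit : X → StoneCech X) (𝓝 p)) (𝓝 (fstar f p)) := by
  have h : Filter.Tendsto (fstar f ∘ (stoneCechUnit : X → StoneCech X))
      (Filter.comap (stoneCechUnit : X → StoneCech X) (𝓝 p)) (𝓝 (fstar f p)) :=
    ((continuous_stoneCechExtend (OnePoint.continuous_coe.comp f.continuous)).tendsto p).comp
      tendsto_comap
  simpa [Function.comp_def, fstar_unit] using h

lemma fstar_eq_of_tendsto {f : C(X, ℝ)} {p : StoneCech X} {r : ℝ}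
    (h : Filter.Tendsto (fun x : X => f x)
      (Filter.comap (stoneCechUnit : X → StoneCech X) (𝓝 p)) (𝓝 r)) :
    fstar f p = (r : OnePoint ℝ) := by
  have := neBot_comap_stoneCechUnit p
  exact tendsto_nhds_unique (tendsto_fstar f p)
    ((OnePoint.continuous_coe.tendsto r).comp h)

lemma tendsto_of_fstar_eq {f : C(X, ℝ)} {p : StoneCech X} {r : ℝ}
    (h : fstar f p = (r : OnePoint ℝ)) :
    Filter.Tendsto (fun x : X => f x)
      (Filter.comap (stoneCechUnit : X → StoneCech X) (𝓝 p)) (𝓝 r) := by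
  have := tendsto_fstar f p
  rw [h] at this
  exact (OnePoint.isOpenEmbedding_coe.tendsto_nhds_iff).mpr this

/-- The intermediate ring `C_p = {f ∈ C(X) : f*(p) ∈ ℝ}`, as a subring of `C(X)`. -/
noncomputable def CpRing (p : StoneCech X) : Subring C(X, ℝ) where
  carrier := Cp p
  zero_mem' := ⟨0, fstar_eq_of_tendsto (by simpa using tendsto_const_nhds)⟩
  one_mem' := ⟨1, fstar_eq_of_tendsto (by simpa using tendsto_const_nhds)⟩
  add_mem' := by
    rintro f g ⟨r, hr⟩ ⟨s, hs⟩
    exact ⟨r + s, fstar_eq_of_tendsto (by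
      simpa using (tendsto_of_fstar_eq hr).add (tendsto_of_fstar_eq hs))⟩
  mul_mem' := by
    rintro f g ⟨r, hr⟩ ⟨s, hs⟩
    exact ⟨r * s, fstar_eq_of_tendsto (by
      simpa using (tendsto_of_fstar_eq hr).mul (tendsto_of_fstar_eq hs))⟩
  neg_mem' := by
    rintro f ⟨r, hr⟩
    exact ⟨-r, fstar_eq_of_tendsto (by simpa using (tendsto_of_fstar_eq hr).neg)⟩

open Set

lemma continuous_of_forall_continuous_comp {A K : Type*} [TopologicalSpace A]
    [TopologicalSpace K] [CompactSpace K] [T2Space K] {t : A → K}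
    (h : ∀ g : C(K, ℝ), Continuous (g ∘ t)) : Continuous t := by
  have hsep : IsClosedEmbedding fun (k : K) (g : C(K, ℝ)) => g k := by
    refine (continuous_pi fun g => g.continuous).isClosedEmbedding fun k l hkl => ?_
    by_contra hne
    obtain ⟨g, hg, hne'⟩ := separatesPoints_continuous_of_t35Space hne
    exact hne' (congrFun hkl ⟨g, hg⟩)
  exact hsep.continuous_iff.mpr (continuous_pi h)

lemma tendsto_of_sq_sub_le {α : Type*} {l : Filter α} {f h : α → ℝ} {a : ℝ}
    (hle : ∀ x, (f x - a) ^ 2 ≤ h x) (hh : Tendsto h l (𝓝 0)) : Tendsto f l (𝓝 a) := by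
  have hsq : Tendsto (fun x => (f x - a) ^ 2) l (𝓝 0) :=
    squeeze_zero (fun x => sq_nonneg _) hle hh
  rw [tendsto_iff_norm_sub_tendsto_zero]
  simpa [Real.sqrt_sq_eq_abs, Function.comp_def] using (Real.continuous_sqrt.tendsto 0).comp hsq

section ProperSequence

variable {Y : Type*} [TopologicalSpace Y] [T2Space Y] [CompactlyCoherentSpace Y]

lemma isClosed_range_of_tendsto_cocompact {a : ℕ → Y} (ha : Tendsto a atTop (cocompact Y)) :
    IsClosed (range a) := by
  refine (isProperMap_iff_tendsto_cocompact.mpr ⟨continuous_of_discreteTopology, ?_⟩).isClosed_range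
  rwa [cocompact_eq_cofinite, Nat.cofinite_eq_atTop]

lemma exists_continuous_eq_zero_eq_one [NormalSpace Y] {a : ℕ → Y} (ha : Function.Injective a)
    (hlim : Tendsto a atTop (cocompact Y)) :
    ∃ ψ : C(Y, ℝ), ∀ i, ψ (a (2 * i)) = 0 ∧ ψ (a (2 * i + 1)) = 1 := by
  have heven : Tendsto (fun i => 2 * i) atTop atTop :=
    StrictMono.tendsto_atTop fun i j h => by omega
  have hodd : Tendsto (fun i => 2 * i + 1) atTop atTop :=
    StrictMono.tendsto_atTop fun i j h => by omega
  have hdisj : Disjoint (range fun i => a (2 * i)) (range fun i => a (2 * i + 1)) := by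
    refine disjoint_left.mpr ?_
    rintro _ ⟨i, rfl⟩ ⟨j, hj⟩
    have := ha hj
    omega
  obtain ⟨ψ, h0, h1, -⟩ := exists_continuous_zero_one_of_isClosed
    (isClosed_range_of_tendsto_cocompact (hlim.comp heven))
    (isClosed_range_of_tendsto_cocompact (hlim.comp hodd)) hdisj
  exact ⟨ψ, fun i => ⟨h0 ⟨i, rfl⟩, h1 ⟨i, rfl⟩⟩⟩

end ProperSequence

def withPoint (r : StoneCech X) : Set (StoneCech X) :=
  insert r (range stoneCechUnit)

lemma stoneCechUnit_mem_withPoint (r : StoneCech X) (x : X) : stoneCechUnit x ∈ withPoint r :=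
  mem_insert_of_mem r (mem_range_self x)

lemma continuous_fstar (f : C(X, ℝ)) : Continuous (fstar f) :=
  continuous_stoneCechExtend _

lemma exists_fstar_eq_of_mem_withPoint {r u : StoneCech X} (hu : u ∈ withPoint r)
    {f : C(X, ℝ)} (hf : f ∈ CpRing r) : ∃ c : ℝ, fstar f u = c := by
  obtain rfl | ⟨x, rfl⟩ := hu
  · exact hf
  · exact ⟨f x, fstar_unit f x⟩

/-- The real value of `f*` at `u`, with the junk value `0` where `f*(u) = ∞`. -/
noncomputable def valueAt (u : StoneCech X) (f : C(X, ℝ)) : ℝ :=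
  (fstar f u).elim 0 id

lemma valueAt_eq_of_fstar_eq {u : StoneCech X} {f : C(X, ℝ)} {c : ℝ}
    (h : fstar f u = c) : valueAt u f = c := by
  rw [valueAt, h]
  rfl

lemma valueAt_eq_of_tendsto {u : StoneCech X} {f : C(X, ℝ)} {c : ℝ}
    (h : Tendsto (fun x => f x) (comap stoneCechUnit (𝓝 u)) (𝓝 c)) : valueAt u f = c :=
  valueAt_eq_of_fstar_eq (fstar_eq_of_tendsto h)

lemma fstar_eq_valueAt {r u : StoneCech X} (hu : u ∈ withPoint r) {f : C(X, ℝ)}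
    (hf : f ∈ CpRing r) : fstar f u = valueAt u f := by
  obtain ⟨c, hc⟩ := exists_fstar_eq_of_mem_withPoint hu hf
  rw [hc, valueAt_eq_of_fstar_eq hc]

lemma tendsto_valueAt {r u : StoneCech X} (hu : u ∈ withPoint r) {f : C(X, ℝ)}
    (hf : f ∈ CpRing r) : Tendsto (fun x => f x) (comap stoneCechUnit (𝓝 u)) (𝓝 (valueAt u f)) :=
  tendsto_of_fstar_eq (fstar_eq_valueAt hu hf)

lemma valueAt_one (u : StoneCech X) : valueAt u 1 = 1 :=
  valueAt_eq_of_tendsto tendsto_const_nhds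

lemma valueAt_zero (u : StoneCech X) : valueAt u 0 = 0 :=
  valueAt_eq_of_tendsto tendsto_const_nhds

lemma valueAt_add {r u : StoneCech X} (hu : u ∈ withPoint r) {f g : C(X, ℝ)}
    (hf : f ∈ CpRing r) (hg : g ∈ CpRing r) : valueAt u (f + g) = valueAt u f + valueAt u g :=
  valueAt_eq_of_tendsto ((tendsto_valueAt hu hf).add (tendsto_valueAt hu hg))

lemma valueAt_mul {r u : StoneCech X} (hu : u ∈ withPoint r) {f g : C(X, ℝ)}
    (hf : f ∈ CpRing r) (hg : g ∈ CpRing r) : valueAt u (f * g) = valueAt u f * valueAt u g :=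
  valueAt_eq_of_tendsto ((tendsto_valueAt hu hf).mul (tendsto_valueAt hu hg))

noncomputable def evalHom {r : StoneCech X} (u : withPoint r) : CpRing r →+* ℝ where
  toFun f := valueAt (u : StoneCech X) (f : C(X, ℝ))
  map_one' := valueAt_one u.1
  map_zero' := valueAt_zero u.1
  map_add' f g := valueAt_add u.2 f.2 g.2
  map_mul' f g := valueAt_mul u.2 f.2 g.2

lemma continuous_evalHom_apply {r : StoneCech X} (f : CpRing r) :
    Continuous fun u : withPoint r => evalHom u f := by
  have hcont : Continuous fun u : withPoint r => fstar (f : C(X, ℝ)) u :=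
    (continuous_fstar _).comp continuous_subtype_val
  simp only [fun u : withPoint r => fstar_eq_valueAt u.2 f.2] at hcont
  exact OnePoint.isOpenEmbedding_coe.isEmbedding.continuous_iff.mpr hcont

lemma fstar_comp_stoneCechUnit (h : C(StoneCech X, ℝ)) (u : StoneCech X) :
    fstar (h.comp ⟨stoneCechUnit, continuous_stoneCechUnit⟩) u = h u :=
  fstar_eq_of_tendsto ((h.continuous.tendsto u).comp tendsto_comap)

def ofStoneCech (r : StoneCech X) (h : C(StoneCech X, ℝ)) : CpRing r :=
  ⟨h.comp ⟨stoneCechUnit, continuous_stoneCechUnit⟩, h r, fstar_comp_stoneCechUnit h r⟩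

lemma evalHom_ofStoneCech {r : StoneCech X} (u : withPoint r) (h : C(StoneCech X, ℝ)) :
    evalHom u (ofStoneCech r h) = h u :=
  valueAt_eq_of_fstar_eq (fstar_comp_stoneCechUnit h u)

lemma evalHom_injective (r : StoneCech X) :
    Function.Injective (evalHom : withPoint r → CpRing r →+* ℝ) := by
  intro u v huv
  by_contra hne
  obtain ⟨h, hh, hne'⟩ := separatesPoints_continuous_of_t35Space (Subtype.coe_injective.ne hne)
  apply hne'
  simpa only [evalHom_ofStoneCech, ContinuousMap.coe_mk] using congr($huv (ofStoneCech r ⟨h, hh⟩))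

lemma exists_tendsto_abs_atTop_of_notMem_upsilon {u : StoneCech X} (hu : u ∉ upsilon X) :
    ∃ f : C(X, ℝ), Tendsto (fun x => |f x|) (comap stoneCechUnit (𝓝 u)) atTop := by
  simp only [upsilon, mem_ofPred_eq, not_forall] at hu
  obtain ⟨f, hf⟩ := hu
  have hinf : fstar f u = OnePoint.infty := by
    by_contra hne
    exact hf ((OnePoint.ne_infty_iff_exists.mp hne).imp fun _ h => h.symm)
  have hcocompact : Tendsto (fun x => f x) (comap stoneCechUnit (𝓝 u)) (cocompact ℝ) := by
    rw [← coclosedCompact_eq_cocompact, ← OnePoint.comap_coe_nhds_infty, tendsto_comap_iff,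
      ← hinf]
    exact tendsto_fstar f u
  exact ⟨f, tendsto_norm_cocompact_atTop.comp hcocompact⟩

lemma exists_mem_cpRing_tendsto_abs_atTop {r u : StoneCech X} (hu : u ∉ upsilon X)
    (hur : u ≠ r) :
    ∃ g ∈ CpRing r, Tendsto (fun x => |g x|) (comap stoneCechUnit (𝓝 u)) atTop := by
  obtain ⟨f, hf⟩ := exists_tendsto_abs_atTop_of_notMem_upsilon hu
  obtain ⟨N, hNr, hNc, hNu⟩ :=
    exists_mem_nhds_isClosed_subset (isOpen_compl_singleton.mem_nhds hur.symm)
  obtain ⟨h, hN, hu1, h01⟩ := exists_continuous_zero_one_of_isClosed hNc isClosed_singleton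
    (disjoint_singleton_right.mpr fun h => hNu h rfl)
  refine ⟨f * h.comp ⟨stoneCechUnit, continuous_stoneCechUnit⟩, ⟨0, fstar_eq_of_tendsto ?_⟩, ?_⟩
  · refine tendsto_const_nhds.congr' ?_
    filter_upwards [preimage_mem_comap hNr] with x hx
    simp [hN hx]
  · have hh : Tendsto (fun x => h (stoneCechUnit x)) (comap stoneCechUnit (𝓝 u)) (𝓝 1) := by
      have h1 : h u = 1 := hu1 rfl
      exact h1 ▸ (h.continuous.tendsto u).comp tendsto_comap
    refine (hf.atTop_mul_pos one_pos hh).congr fun x => ?_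
    simp [abs_mul, abs_of_nonneg (h01 _).1]

noncomputable def constHom (r : StoneCech X) : ℝ →+* CpRing r :=
  ContinuousMap.C.codRestrict (CpRing r) fun c => ⟨c, fstar_eq_of_tendsto tendsto_const_nhds⟩

@[simp]
lemma constHom_apply (r : StoneCech X) (c : ℝ) (x : X) : (constHom r c : C(X, ℝ)) x = c :=
  rfl

lemma ringHom_constHom {r : StoneCech X} (φ : CpRing r →+* ℝ) (c : ℝ) : φ (constHom r c) = c :=
  DFunLike.congr_fun (Subsingleton.elim (φ.comp (constHom r)) (RingHom.id ℝ)) c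

lemma isUnit_of_forall_le {r : StoneCech X} {f : CpRing r} {δ : ℝ} (hδ : 0 < δ)
    (hf : ∀ x, δ ≤ (f : C(X, ℝ)) x) : IsUnit f := by
  have := neBot_comap_stoneCechUnit r
  have hlim := tendsto_valueAt (mem_insert r _) f.2
  have hpos : 0 < valueAt r f := hδ.trans_le (ge_of_tendsto' hlim hf)
  have hf0 x : (f : C(X, ℝ)) x ≠ 0 := (hδ.trans_le (hf x)).ne'
  let g : C(X, ℝ) := ⟨fun x => ((f : C(X, ℝ)) x)⁻¹, (f : C(X, ℝ)).continuous.inv₀ hf0⟩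
  have hg : g ∈ CpRing r := ⟨_, fstar_eq_of_tendsto (hlim.inv₀ hpos.ne')⟩
  exact IsUnit.of_mul_eq_one ⟨g, hg⟩ <| Subtype.ext <| ContinuousMap.ext fun x =>
    mul_inv_cancel₀ (hf0 x)

lemma ringHom_mem_closure_range {r : StoneCech X} (φ : CpRing r →+* ℝ) (f : CpRing r) :
    φ f ∈ closure (range (f : C(X, ℝ))) := by
  by_contra hf
  rw [Metric.mem_closure_range_iff] at hf
  push Not at hf
  obtain ⟨ε, hε, hfar⟩ := hf
  have hunit : IsUnit ((f - constHom r (φ f)) ^ 2) := by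
    refine isUnit_of_forall_le (pow_pos hε 2) fun x => ?_
    simpa [Real.dist_eq, sq_abs, abs_sub_comm] using
      pow_le_pow_left₀ hε.le (hfar x) 2
  simpa [ringHom_constHom] using (hunit.map φ).ne_zero

noncomputable def ringHomFilter {r : StoneCech X} (φ : CpRing r →+* ℝ) : Filter X :=
  ⨅ f : CpRing r, comap (fun x => (f : C(X, ℝ)) x) (𝓝 (φ f))

lemma ringHomFilter_neBot {r : StoneCech X} (φ : CpRing r →+* ℝ) : (ringHomFilter φ).NeBot := by
  refine iInf_neBot_of_directed' (fun f g => ?_) fun f => comap_neBot fun t ht => ?_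
  · -- `(f - φ f)² + (g - φ g)²` is killed by `φ` and controls both `f` and `g`
    let h := (f - constHom r (φ f)) ^ 2 + (g - constHom r (φ g)) ^ 2
    have hφh : φ h = 0 := by simp [h, ringHom_constHom]
    have hh : Tendsto (fun x => (h : C(X, ℝ)) x) (comap (fun x => (h : C(X, ℝ)) x) (𝓝 (φ h)))
        (𝓝 0) := hφh ▸ tendsto_comap
    refine ⟨h, tendsto_iff_comap.mp (tendsto_of_sq_sub_le (fun x => ?_) hh),
      tendsto_iff_comap.mp (tendsto_of_sq_sub_le (fun x => ?_) hh)⟩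
    all_goals simp [h, sq_nonneg]
  · obtain ⟨_, hy, x, rfl⟩ := mem_closure_iff_nhds.mp (ringHom_mem_closure_range φ f) t ht
    exact ⟨x, hy⟩

lemma fstar_eq_of_clusterPt {r u : StoneCech X} {φ : CpRing r →+* ℝ}
    (hu : ClusterPt u (map stoneCechUnit (ringHomFilter φ))) (f : CpRing r) :
    fstar (f : C(X, ℝ)) u = φ f := by
  have hf : Tendsto (fun x => (f : C(X, ℝ)) x) (ringHomFilter φ) (𝓝 (φ f)) :=
    tendsto_iff_comap.mpr (iInf_le _ f)
  refine eq_of_nhds_neBot (hu.map (continuous_fstar _).continuousAt ?_)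
  rw [tendsto_map'_iff]
  simpa [Function.comp_def, fstar_unit] using (OnePoint.continuous_coe.tendsto _).comp hf

theorem exists_evalHom_eq (hrc : upsilon X = range stoneCechUnit) {r : StoneCech X}
    (φ : CpRing r →+* ℝ) : ∃ u : withPoint r, evalHom u = φ := by
  have := ringHomFilter_neBot φ
  obtain ⟨u, hu⟩ := exists_clusterPt_of_compactSpace (map stoneCechUnit (ringHomFilter φ))
  have hval := fstar_eq_of_clusterPt hu
  have hmem : u ∈ withPoint r := by
    by_contra hnot
    have hup : u ∉ upsilon X := hrc ▸ fun h => hnot (mem_insert_of_mem r h)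
    obtain ⟨g, hg, hlim⟩ :=
      exists_mem_cpRing_tendsto_abs_atTop hup fun h => hnot (h ▸ mem_insert r _)
    have := neBot_comap_stoneCechUnit u
    exact not_tendsto_nhds_of_tendsto_atTop hlim _ (tendsto_of_fstar_eq (hval ⟨g, hg⟩)).abs
  exact ⟨⟨u, hmem⟩, RingHom.ext fun f => valueAt_eq_of_fstar_eq (hval f)⟩

section Realcompact

variable (hrc : upsilon X = range stoneCechUnit)

noncomputable def evalEquiv (r : StoneCech X) : withPoint r ≃ (CpRing r →+* ℝ) :=
  Equiv.ofBijective evalHom ⟨evalHom_injective r, exists_evalHom_eq hrc⟩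

noncomputable def pullbackPoint {p q : StoneCech X} (Φ : CpRing p →+* CpRing q)
    (u : withPoint q) : withPoint p :=
  (evalEquiv hrc p).symm ((evalHom u).comp Φ)

lemma evalHom_pullbackPoint {p q : StoneCech X} (Φ : CpRing p →+* CpRing q) (u : withPoint q) :
    evalHom (pullbackPoint hrc Φ u) = (evalHom u).comp Φ :=
  (evalEquiv hrc p).apply_symm_apply _

lemma continuous_pullbackPoint {p q : StoneCech X} (Φ : CpRing p →+* CpRing q) :
    Continuous (pullbackPoint hrc Φ) := by
  refine continuous_induced_rng.mpr (continuous_of_forall_continuous_comp fun h => ?_)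
  have hcomp : h ∘ Subtype.val ∘ pullbackPoint hrc Φ =
      fun u => evalHom u (Φ (ofStoneCech p h)) := by
    ext u
    rw [Function.comp_apply, Function.comp_apply, ← evalHom_ofStoneCech, evalHom_pullbackPoint,
      RingHom.comp_apply]
  rw [hcomp]
  exact continuous_evalHom_apply _

lemma pullbackPoint_pullbackPoint {p q : StoneCech X} (Φ : CpRing p ≃+* CpRing q)
    (u : withPoint q) :
    pullbackPoint hrc (Φ.symm : CpRing q →+* CpRing p) (pullbackPoint hrc Φ u) = u := by
  apply evalHom_injective
  ext f
  simp [evalHom_pullbackPoint]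

noncomputable def homeomorphOfRingEquiv {p q : StoneCech X} (Φ : CpRing p ≃+* CpRing q) :
    withPoint q ≃ₜ withPoint p where
  toFun := pullbackPoint hrc Φ
  invFun := pullbackPoint hrc (Φ.symm : CpRing q →+* CpRing p)
  left_inv := pullbackPoint_pullbackPoint hrc Φ
  right_inv u := by simpa using pullbackPoint_pullbackPoint hrc Φ.symm u
  continuous_toFun := continuous_pullbackPoint hrc _
  continuous_invFun := continuous_pullbackPoint hrc _

end Realcompact

def unitWithPoint (r : StoneCech X) (x : X) : withPoint r :=
  ⟨stoneCechUnit x, stoneCechUnit_mem_withPoint r x⟩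

lemma comap_unitWithPoint_nhds {r u : StoneCech X} (hu : u ∈ withPoint r) :
    comap (unitWithPoint r) (𝓝 ⟨u, hu⟩) = comap stoneCechUnit (𝓝 u) := by
  rw [nhds_subtype, comap_comap]
  rfl

lemma not_tendsto_stoneCechUnit_of_notMem_upsilon {r : StoneCech X} (hr : r ∉ upsilon X)
    (xs : ℕ → X) : ¬ Tendsto (fun k => stoneCechUnit (xs k)) atTop (𝓝 r) := by
  intro hxs
  obtain ⟨f, hf⟩ := exists_tendsto_abs_atTop_of_notMem_upsilon hr
  have hb : Tendsto (fun k => |f (xs k)|) atTop atTop := hf.comp (tendsto_comap_iff.mpr hxs)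
  obtain ⟨φ, hφ, hmono⟩ := strictMono_subseq_of_tendsto_atTop hb
  obtain ⟨ψ, hψ⟩ := exists_continuous_eq_zero_eq_one hmono.injective
    ((hb.comp hφ.tendsto_atTop).mono_right atTop_le_cocompact)
  let g : C(X, ℝ) := ⟨fun x => ψ |f x|, ψ.continuous.comp (continuous_abs.comp f.continuous)⟩
  have hlim {c : ℕ → ℕ} (hc : StrictMono c) :
      Tendsto (fun i => (g (xs (φ (c i))) : OnePoint ℝ)) atTop (𝓝 (fstar g r)) := by
    simpa [Function.comp_def, fstar_unit] using ((continuous_fstar g).tendsto r).comp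
      (hxs.comp (hφ.comp hc).tendsto_atTop)
  have h0 : fstar g r = ((0 : ℝ) : OnePoint ℝ) := by
    refine tendsto_nhds_unique (hlim (c := (2 * ·)) fun i j h => by dsimp only; omega) ?_
    exact tendsto_const_nhds.congr fun i => congrArg _ (hψ i).1.symm
  have h1 : fstar g r = ((1 : ℝ) : OnePoint ℝ) := by
    refine tendsto_nhds_unique (hlim (c := (2 * · + 1)) fun i j h => by dsimp only; omega) ?_
    exact tendsto_const_nhds.congr fun i => congrArg _ (hψ i).2.symm
  exact zero_ne_one (OnePoint.coe_injective (h0.symm.trans h1))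

lemma not_isCountablyGenerated_comap_nhds {r : StoneCech X} (hr : r ∉ upsilon X) :
    ¬ (comap stoneCechUnit (𝓝 r)).IsCountablyGenerated := by
  intro
  have := neBot_comap_stoneCechUnit r
  obtain ⟨xs, hxs⟩ := exists_seq_tendsto (comap stoneCechUnit (𝓝 r))
  exact not_tendsto_stoneCechUnit_of_notMem_upsilon hr xs
    ((tendsto_comap_iff (g := stoneCechUnit)).mp hxs)

lemma isCountablyGenerated_nhds_unitWithPoint [CompletelyRegularSpace X]
    [FirstCountableTopology X] {r : StoneCech X} {x : X} (hx : stoneCechUnit x ≠ r) :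
    (𝓝 (unitWithPoint r x)).IsCountablyGenerated := by
  have hind : IsInducing (unitWithPoint r) := isInducing_stoneCechUnit.codRestrict _
  have hrange : range (unitWithPoint r) ∈ 𝓝 (unitWithPoint r x) := by
    have hne : unitWithPoint r x ≠ ⟨r, mem_insert r _⟩ := fun h => hx (congrArg Subtype.val h)
    refine mem_of_superset (isOpen_compl_singleton.mem_nhds hne) ?_
    rintro ⟨v, rfl | ⟨y, rfl⟩⟩ hv
    · exact absurd rfl hv
    · exact ⟨y, rfl⟩
  rw [← hind.map_nhds_of_mem x hrange]
  infer_instance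

theorem homeomorph_withPoint_apply_self (hrc : upsilon X = range stoneCechUnit)
    [CompletelyRegularSpace X] [FirstCountableTopology X] {p q : StoneCech X}
    (hp : p ∉ range stoneCechUnit) (hq : q ∉ range stoneCechUnit)
    (T : withPoint q ≃ₜ withPoint p) : T ⟨q, mem_insert q _⟩ = ⟨p, mem_insert p _⟩ := by
  obtain hTq | ⟨x, hx⟩ := (T ⟨q, mem_insert q _⟩).2
  · exact Subtype.ext hTq
  · -- `q` would then inherit from `x` a countable neighbourhood base in `X ∪ {q}`
    have hTx : T ⟨q, mem_insert q _⟩ = unitWithPoint p x := Subtype.ext hx.symm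
    have : (𝓝 (⟨q, mem_insert q _⟩ : withPoint q)).IsCountablyGenerated := by
      rw [T.isInducing.nhds_eq_comap, hTx]
      have := isCountablyGenerated_nhds_unitWithPoint fun h => hp ⟨x, h⟩
      infer_instance
    refine absurd ?_ (not_isCountablyGenerated_comap_nhds (hrc ▸ hq))
    rw [← comap_unitWithPoint_nhds (mem_insert q _)]
    infer_instance

lemma exists_continuous_extend {Y : Set (StoneCech X)} (hY : range stoneCechUnit ⊆ Y)
    {g : Y → StoneCech X} (hg : Continuous g) :
    ∃ G : StoneCech X → StoneCech X, Continuous G ∧ ∀ y : Y, G y = g y := by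
  let incl : X → Y := fun x => ⟨stoneCechUnit x, hY (mem_range_self x)⟩
  have hincl : Continuous incl := continuous_stoneCechUnit.subtype_mk _
  have hdense : DenseRange incl := by
    refine Subtype.dense_iff.mpr fun y _ => ?_
    rw [← range_comp]
    exact denseRange_stoneCechUnit y
  let G := stoneCechExtend (hg.comp hincl)
  have hGc : Continuous G := continuous_stoneCechExtend _
  refine ⟨G, hGc, congrFun ?_⟩
  refine Continuous.ext_on hdense (hGc.comp continuous_subtype_val) hg ?_
  rintro _ ⟨x, rfl⟩
  exact stoneCechExtend_stoneCechUnit (hg.comp hincl) x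

lemma leftInverse_of_extends_homeomorph {Y Z : Set (StoneCech X)} (hY : range stoneCechUnit ⊆ Y)
    (T : Y ≃ₜ Z) {H₀ H₁ : StoneCech X → StoneCech X} (hH₀c : Continuous H₀)
    (hH₁c : Continuous H₁) (hH₀ : ∀ y : Y, H₀ y = T y) (hH₁ : ∀ z : Z, H₁ z = T.symm z) :
    Function.LeftInverse H₁ H₀ := by
  refine congrFun (stoneCech_hom_ext (hH₁c.comp hH₀c) continuous_id ?_)
  ext x
  have hx : stoneCechUnit x ∈ Y := hY (mem_range_self x)
  simp only [Function.comp_apply]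
  rw [show stoneCechUnit x = ((⟨_, hx⟩ : Y) : StoneCech X) from rfl, hH₀, hH₁,
    T.symm_apply_apply]

theorem exists_homeomorph_extend {Y Z : Set (StoneCech X)} (hY : range stoneCechUnit ⊆ Y)
    (hZ : range stoneCechUnit ⊆ Z) (T : Y ≃ₜ Z) :
    ∃ H : StoneCech X ≃ₜ StoneCech X, (∀ y : Y, H y = T y) ∧ ∀ z : Z, H.symm z = T.symm z := by
  obtain ⟨H₀, hH₀c, hH₀⟩ := exists_continuous_extend hY (continuous_subtype_val.comp T.continuous)
  obtain ⟨H₁, hH₁c, hH₁⟩ :=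
    exists_continuous_extend hZ (continuous_subtype_val.comp T.symm.continuous)
  exact ⟨{ toFun := H₀, invFun := H₁
           left_inv := leftInverse_of_extends_homeomorph hY T hH₀c hH₁c hH₀ hH₁
           right_inv := leftInverse_of_extends_homeomorph hZ T.symm hH₁c hH₀c hH₁ hH₀ },
    hH₀, hH₁⟩

lemma homeomorph_unitWithPoint_mem_range {p q : StoneCech X} (hp : p ∉ range stoneCechUnit)
    (T : withPoint p ≃ₜ withPoint q) (hT : T ⟨p, mem_insert p _⟩ = ⟨q, mem_insert q _⟩)
    (x : X) : (T (unitWithPoint p x) : StoneCech X) ∈ range stoneCechUnit := by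
  refine (T (unitWithPoint p x)).2.resolve_left fun h => hp ⟨x, ?_⟩
  have hTx : T (unitWithPoint p x) = T ⟨p, mem_insert p _⟩ := hT ▸ Subtype.ext h
  exact congrArg Subtype.val (T.injective hTx)

theorem exists_homeomorph_compl_range_apply_eq {p q : StoneCech X}
    (hp : p ∉ range stoneCechUnit) (hq : q ∉ range stoneCechUnit)
    (T : withPoint p ≃ₜ withPoint q) (hT : T ⟨p, mem_insert p _⟩ = ⟨q, mem_insert q _⟩) :
    ∃ G : ↥(range (stoneCechUnit : X → StoneCech X))ᶜ ≃ₜ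
      ↥(range (stoneCechUnit : X → StoneCech X))ᶜ, G ⟨p, hp⟩ = ⟨q, hq⟩ := by
  have hTs : T.symm ⟨q, mem_insert q _⟩ = ⟨p, mem_insert p _⟩ := T.symm_apply_eq.mpr hT.symm
  obtain ⟨H, hH, hHs⟩ := exists_homeomorph_extend (subset_insert p _) (subset_insert q _) T
  have hrange (u : StoneCech X) : u ∈ range stoneCechUnit ↔ H u ∈ range stoneCechUnit := by
    constructor
    · rintro ⟨x, rfl⟩
      exact (hH (unitWithPoint p x)).symm ▸ homeomorph_unitWithPoint_mem_range hp T hT x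
    · rintro ⟨y, hy⟩
      rw [← H.symm_apply_apply u, ← hy]
      exact (hHs (unitWithPoint q y)).symm ▸ homeomorph_unitWithPoint_mem_range hq T.symm hTs y
  exact ⟨H.subtype fun u => (hrange u).not, Subtype.ext ((hH _).trans (congrArg Subtype.val hT))⟩

theorem statement10_general [CompletelyRegularSpace X]
    [FirstCountableTopology X]
    (hrc : upsilon X = Set.range (stoneCechUnit : X → StoneCech X))
    (p q : ((Set.range (stoneCechUnit : X → StoneCech X))ᶜ : Set (StoneCech X)))
    (hp : CountableInterFilter (𝓝 p))
    (hq : ¬ CountableInterFilter (𝓝 q)) :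
    ¬ Nonempty (CpRing (p : StoneCech X) ≃+* CpRing (q : StoneCech X)) := by
  rintro ⟨Φ⟩
  let T := (homeomorphOfRingEquiv hrc Φ).symm
  obtain ⟨G, hG⟩ := exists_homeomorph_compl_range_apply_eq p.2 q.2 T
    (homeomorph_withPoint_apply_self hrc q.2 p.2 T)
  rw [show q = G p from hG.symm, ← G.map_nhds_eq] at hq
  exact hq inferInstance

/-- Let `X` be a first countable, noncompact, realcompact space. If `p` is a `P`-point of the
subspace `βX \ X` (its neighbourhood filter is closed under countable intersections) and `q`
is a non-`P`-point of `βX \ X`, then the ring `C_p` is not isomorphic to the ring `C_q`. -/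
theorem statement10 [T2Space X] [CompletelyRegularSpace X]
    [FirstCountableTopology X]
    (hnc : ¬ CompactSpace X)
    (hrc : upsilon X = Set.range (stoneCechUnit : X → StoneCech X))
    (p q : ((Set.range (stoneCechUnit : X → StoneCech X))ᶜ : Set (StoneCech X)))
    (hp : CountableInterFilter (𝓝 p))
    (hq : ¬ CountableInterFilter (𝓝 q)) :
    ¬ Nonempty (CpRing (p : StoneCech X) ≃+* CpRing (q : StoneCech X)) :=
  statement10_general hrc p q hp hq
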